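/- There is no rational number r, integer l, and constant C > 0 such that (1/C)·x^r·(log x)^l ≤ x·log(log x) ≤ C·x^r·(log x)^l for all sufficiently large x. In particular, the function x ↦ x·(log x − log log x) − x + x² is not asymptotically equivalent (up to multiplicative constants) to any function of the form x^r (log x)^l at infinity. -/

import Mathlib

/-!
Taking logarithms, a two-sided bound `x^r (log x)^l / C ≤ x log log x ≤ C x^r (log x)^l` says
that `(1 - r) u - l log u + log log u`, with `u = log x`, stays within `log C` of `0`.
But such an expression always tends to `+∞` or `-∞`: its leading term is `(1 - r) u` if `r ≠ 1`,
`-l log u` if `r = 1, l ≠ 0`, and `log log u` otherwise.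
-/

open Filter Real Asymptotics

lemma Real.isLittleO_log_log_id_atTop : (fun t => log (log t)) =o[atTop] id :=
  (isLittleO_log_id_atTop.comp_tendsto tendsto_log_atTop).trans isLittleO_log_id_atTop

lemma tendsto_abs_const_mul_add_atTop {a : ℝ} (ha : a ≠ 0) {g : ℝ → ℝ} (hg : g =o[atTop] id) :
    Tendsto (fun t => |a * t + g t|) atTop atTop := by
  have hhalf : 0 < |a| / 2 := by positivity
  refine tendsto_atTop_mono' atTop ?_ (tendsto_id.const_mul_atTop hhalf)
  filter_upwards [hg.def hhalf, eventually_ge_atTop 0] with t hgt ht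
  have hlin : |a * t| = |a| * t := by rw [abs_mul, abs_of_nonneg ht]
  rw [Real.norm_eq_abs, Real.norm_eq_abs, id, abs_of_nonneg ht] at hgt
  have := abs_sub_abs_le_abs_add (a * t) (g t)
  simp only [id]
  linarith

lemma tendsto_abs_linear_add_log_add_log_log_atTop (a b : ℝ) :
    Tendsto (fun u => |a * u + b * log u + log (log u)|) atTop atTop := by
  rcases ne_or_eq a 0 with ha | rfl
  · have hsmall : (fun u => b * log u + log (log u)) =o[atTop] id :=
      (isLittleO_log_id_atTop.const_mul_left b).add isLittleO_log_log_id_atTop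
    simpa only [add_assoc] using tendsto_abs_const_mul_add_atTop ha hsmall
  rcases ne_or_eq b 0 with hb | rfl
  · simp only [zero_mul, zero_add]
    exact (tendsto_abs_const_mul_add_atTop hb isLittleO_log_id_atTop).comp tendsto_log_atTop
  · simp only [zero_mul, zero_add]
    exact tendsto_abs_atTop_atTop.comp (tendsto_log_atTop.comp tendsto_log_atTop)

lemma abs_log_sub_log_le_log {f g C : ℝ} (hC : 0 < C) (hg : 0 < g) (hlo : C⁻¹ * g ≤ f)
    (hhi : f ≤ C * g) : |log f - log g| ≤ log C := by
  have hf : 0 < f := lt_of_lt_of_le (by positivity) hlo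
  have hlo' := log_le_log (by positivity) hlo
  have hhi' := log_le_log hf hhi
  rw [log_mul (by positivity) hg.ne', log_inv] at hlo'
  rw [log_mul hC.ne' hg.ne'] at hhi'
  exact abs_sub_le_iff.mpr ⟨by linarith, by linarith⟩

lemma log_mul_log_log_sub_log_rpow_mul_zpow (r : ℝ) (l : ℤ) {x : ℝ} (hx : exp 1 < x) :
    log (x * log (log x)) - log (x ^ r * log x ^ l) =
      (1 - r) * log x + (-l) * log (log x) + log (log (log x)) := by
  have hx0 : 0 < x := (exp_pos 1).trans hx
  have hlog : 1 < log x := (lt_log_iff_exp_lt hx0).mpr hx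
  have hloglog : 0 < log (log x) := log_pos hlog
  rw [log_mul hx0.ne' hloglog.ne', log_mul (rpow_pos_of_pos hx0 r).ne'
    (zpow_pos (by linarith) l).ne', log_rpow hx0, log_zpow]
  ring

/-- There is no rational `r`, integer `l` and constant `C > 0` such that
`(1/C)·x^r·(log x)^l ≤ x·log(log x) ≤ C·x^r·(log x)^l` for all sufficiently large `x`. -/
theorem stmt11 : ¬ ∃ (r : ℚ) (l : ℤ) (C : ℝ), 0 < C ∧
    ∀ᶠ x : ℝ in Filter.atTop,
      (1 / C) * x ^ ((r : ℝ)) * (Real.log x) ^ l ≤ x * Real.log (Real.log x) ∧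
      x * Real.log (Real.log x) ≤ C * x ^ ((r : ℝ)) * (Real.log x) ^ l := by
  rintro ⟨r, l, C, hC, hev⟩
  have hbounded : ∀ᶠ x in atTop,
      |(1 - r) * log x + (-l) * log (log x) + log (log (log x))| ≤ log C := by
    filter_upwards [hev, eventually_gt_atTop (exp 1)] with x ⟨hlo, hhi⟩ hx
    have hx1 : 1 < x := (one_lt_exp_iff.mpr one_pos).trans hx
    rw [← log_mul_log_log_sub_log_rpow_mul_zpow r l hx]
    have hpos : 0 < x ^ (r : ℝ) * log x ^ l :=
      mul_pos (rpow_pos_of_pos (by linarith) _) (zpow_pos (log_pos hx1) l)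
    refine abs_log_sub_log_le_log hC hpos ?_ ?_
    · simpa only [one_div, mul_assoc] using hlo
    · simpa only [mul_assoc] using hhi
  have hunbounded : ∀ᶠ x in atTop,
      log C < |(1 - r) * log x + (-l) * log (log x) + log (log (log x))| :=
    ((tendsto_abs_linear_add_log_add_log_log_atTop _ _).comp tendsto_log_atTop).eventually_gt_atTop
      (log C)
  obtain ⟨x, hle, hlt⟩ := (hbounded.and hunbounded).exists
  exact hle.not_gt hlt
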